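/- Let ψ ∈ Hp(n) with n > 1, let φ be a ψ-compatible family of heaps, and let m ∈ {1,…,n−1} be such that m is not in the image of ψ restricted to {1,…,n}. Then: (a) ψ∖m ∈ Hp(n−1); (b) the image of ψ⋆φ on {1,…,n} is contained in the union of {0} and the image of ψ on {1,…,n}, so in particular m is not in the image of (ψ⋆φ) restricted to {1,…,n}; (c) the family φ∖m defined by (φ∖m)_i = φ_i for i < m and (φ∖m)_i = φ_{i+1} for i ≥ m is (ψ∖m)-compatible, and (ψ∖m)⋆(φ∖m) = (ψ⋆φ)∖m; (d) the restriction ψ|_m of ψ to {0,…,m} lies in Hp(m), the family φ|_m = (φ_i)_{1≤i≤m} is ψ|_m-compatible, and (ψ|_m)⋆(φ|_m) equals the restriction of ψ⋆φ to {0,…,m}. -/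
import Mathlib


/-! ### Min-heaps and inc-lists: basic combinatorics -/

/-- Auxiliary fuelled computation of the depth of a node in a min-heap. -/
def dpAux (φ : ℕ → ℕ) : ℕ → ℕ → ℕ
  | 0, _ => 0
  | fuel + 1, i => if i = 0 then 0 else dpAux φ fuel (φ i) + 1

/-- The depth `dp φ i` of `i` in the min-heap `φ`: for a min-heap and `i ≥ 1`
this is the least `k ≥ 1` with `φ^[k] i = 0`. -/
def dp (φ : ℕ → ℕ) (i : ℕ) : ℕ := dpAux φ i i

/-- The order relation `i ≼_φ j` associated to a min-heap `φ`:
`i ≼_φ j` iff `i = φ^k(j)` for some `k ≥ 0`. -/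
def hle (φ : ℕ → ℕ) (i j : ℕ) : Prop := ∃ k, i = φ^[k] j

/-- `φ` is a min-heap of size `n`: `φ 0 = 0` and `φ i < i` for `i ∈ {1,…,n}`.
(The behaviour of `φ` outside `{0,…,n}` is irrelevant.) -/
def IsHeap (n : ℕ) (φ : ℕ → ℕ) : Prop :=
  φ 0 = 0 ∧ ∀ i, 1 ≤ i → i ≤ n → φ i < i

/-- A normalised min-heap of size `n`: additionally `φ i = 0` outside `{0,…,n}`,
so that normalised heaps correspond bijectively to functions `{0,…,n} → {0,…,n}`. -/
def IsHeapN (n : ℕ) (φ : ℕ → ℕ) : Prop :=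
  IsHeap n φ ∧ ∀ i, n < i → φ i = 0

/-- `α` is an inc-list of length `n`: `α 0 = 0` and `α` is strictly increasing
on `{0,…,n}`. -/
def IsInc (n : ℕ) (α : ℕ → ℕ) : Prop :=
  α 0 = 0 ∧ ∀ i j, i < j → j ≤ n → α i < α j

/-- A normalised inc-list of length `n`: additionally `α i = 0` outside `{0,…,n}`. -/
def IsIncN (n : ℕ) (α : ℕ → ℕ) : Prop :=
  IsInc n α ∧ ∀ i, n < i → α i = 0

/-- `φ` is a `ψ`-compatible family of heaps for `ψ ∈ Hp(n)`:
`φ i ∈ Hp(dp_ψ(i))` for each `i ∈ {1,…,n}`, and whenever `ψ i = j ≥ 1`,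
`φ j` is the restriction of `φ i` to `{0,…,dp_ψ(i) − 1}`. -/
def CompatFam (n : ℕ) (ψ : ℕ → ℕ) (φ : ℕ → ℕ → ℕ) : Prop :=
  (∀ i, 1 ≤ i → i ≤ n → IsHeap (dp ψ i) (φ i)) ∧
  (∀ i, 1 ≤ i → i ≤ n → 1 ≤ ψ i → ∀ j, j ≤ dp ψ i - 1 → φ (ψ i) j = φ i j)

/-- The heap `ψ⋆φ` obtained from `ψ ∈ Hp(n)` and a `ψ`-compatible family `φ`:
`(ψ⋆φ)(0) = 0` and `(ψ⋆φ)(i) = ψ^[dp_ψ(i) − φ_i(dp_ψ(i))](i)`. -/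
def star (ψ : ℕ → ℕ) (φ : ℕ → ℕ → ℕ) (i : ℕ) : ℕ :=
  if i = 0 then 0 else ψ^[dp ψ i - φ i (dp ψ i)] i

/-- `r` is a partial order on `{1,…,n}`, contained in the natural order,
in which every downset is linearly ordered. -/
def GoodOrder (n : ℕ) (r : ℕ → ℕ → Prop) : Prop :=
  (∀ i j, r i j → 1 ≤ i ∧ j ≤ n) ∧
  (∀ i, 1 ≤ i → i ≤ n → r i i) ∧
  (∀ i j k, r i j → r j k → r i k) ∧
  (∀ i j, r i j → r j i → i = j) ∧
  (∀ i j, r i j → i ≤ j) ∧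
  (∀ i j l, r i l → r j l → r i j ∨ r j i)

/-- The order relation on `{1,…,n}` associated to a min-heap of size `n`. -/
def heapRel (n : ℕ) (φ : ℕ → ℕ) (i j : ℕ) : Prop := 1 ≤ i ∧ j ≤ n ∧ hle φ i j

open Classical in
/-- The min-heap `α*φ` associated to an inc-list `α ∈ Inc(n)` and a heap
`φ ∈ Hp(α(n))`, given by the explicit formula
`(α*φ)(j) = max { i ∈ {0,…,j−1} : i = 0 or α(i) ≼_φ α(j) }`. -/
noncomputable def astar (α φ : ℕ → ℕ) (j : ℕ) : ℕ :=
  if j = 0 then 0 else Nat.findGreatest (fun i => 1 ≤ i ∧ hle φ (α i) (α j)) (j - 1)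

/-- The inc-list `α^φ_p` of Definition "projection-free": with
`{p_1 ≺ … ≺ p_m = p}` the `≼_{α*φ}`-downset of `p` (so `p_i = (α*φ)^[m−i](p)`),
`α^φ_p(i) = dp_φ(α(p_i))`. -/
noncomputable def aphiFam (α φ : ℕ → ℕ) (p i : ℕ) : ℕ :=
  if i = 0 then 0 else dp φ (α ((astar α φ)^[dp (astar α φ) p - i] p))

/-- The heap `ψ∖m` of size `n−1` obtained by stripping the leaf `m` from
`ψ ∈ Hp(n)` (where `m` is not in the image of `ψ` on `{1,…,n}`). -/
def strip (ψ : ℕ → ℕ) (m : ℕ) (i : ℕ) : ℕ :=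
  if i < m then ψ i else if ψ (i + 1) < m then ψ (i + 1) else ψ (i + 1) - 1

/-- The family `φ∖m` obtained by deleting the `m`-th member. -/
def stripFam (φ : ℕ → ℕ → ℕ) (m : ℕ) (i : ℕ) : ℕ → ℕ :=
  if i < m then φ i else φ (i + 1)

/- ### Auxiliary lemmas -/

lemma dpAux_zero' (ψ : ℕ → ℕ) : ∀ fuel, dpAux ψ fuel 0 = 0
  | 0 => rfl
  | _ + 1 => by simp [dpAux]

lemma dpAux_succ' (ψ : ℕ → ℕ) (f i : ℕ) (hi : i ≠ 0) :
    dpAux ψ (f + 1) i = dpAux ψ f (ψ i) + 1 := by simp [dpAux, hi]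

lemma dp_zero' (ψ : ℕ → ℕ) : dp ψ 0 = 0 := rfl

lemma dpAux_stable (ψ : ℕ → ℕ) :
    ∀ i, (∀ j, 1 ≤ j → j ≤ i → ψ j < j) → ∀ fuel, i ≤ fuel → dpAux ψ fuel i = dp ψ i := by
  intro i
  induction i using Nat.strong_induction_on with
  | _ i ih =>
    intro hh fuel hfuel
    rcases Nat.eq_zero_or_pos i with rfl | hi
    · rw [dpAux_zero']; rfl
    · obtain ⟨f, rfl⟩ : ∃ f, fuel = f + 1 :=
        ⟨fuel - 1, (Nat.succ_pred_eq_of_pos (lt_of_lt_of_le hi hfuel)).symm⟩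
      have hψi : ψ i < i := hh i hi le_rfl
      have hh' : ∀ j, 1 ≤ j → j ≤ ψ i → ψ j < j := fun j h1 h2 => hh j h1 (h2.trans hψi.le)
      obtain ⟨g, hg⟩ : ∃ g, i = g + 1 := ⟨i - 1, (Nat.succ_pred_eq_of_pos hi).symm⟩
      have h1 : dpAux ψ (f + 1) i = dpAux ψ f (ψ i) + 1 := dpAux_succ' ψ f i hi.ne'
      have h2 : dp ψ i = dpAux ψ g (ψ i) + 1 := by
        rw [dp, hg, dpAux_succ' ψ g (g + 1) (by omega), ← hg]
      rw [h1, h2, ih (ψ i) hψi hh' f (by omega), ih (ψ i) hψi hh' g (by omega)]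

lemma dp_succ' (ψ : ℕ → ℕ) (i : ℕ) (hi : 1 ≤ i)
    (hh : ∀ j, 1 ≤ j → j ≤ i → ψ j < j) : dp ψ i = dp ψ (ψ i) + 1 := by
  have hψi : ψ i < i := hh i hi le_rfl
  have hh' : ∀ j, 1 ≤ j → j ≤ ψ i → ψ j < j := fun j h1 h2 => hh j h1 (h2.trans hψi.le)
  obtain ⟨g, hg⟩ : ∃ g, i = g + 1 := ⟨i - 1, (Nat.succ_pred_eq_of_pos hi).symm⟩
  have h2 : dp ψ i = dpAux ψ g (ψ i) + 1 := by
    rw [dp, hg, dpAux_succ' ψ g (g + 1) (by omega), ← hg]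
  rw [h2, dpAux_stable ψ (ψ i) hh' g (by omega)]

lemma iter_le' (ψ : ℕ → ℕ) (h0 : ψ 0 = 0) :
    ∀ i, (∀ j, 1 ≤ j → j ≤ i → ψ j < j) → ∀ k, ψ^[k] i ≤ i := by
  intro i
  induction i using Nat.strong_induction_on with
  | _ i ih =>
    intro hh k
    rcases Nat.eq_zero_or_pos i with rfl | hi
    · rw [Function.iterate_fixed h0]
    · cases k with
      | zero => exact le_rfl
      | succ k =>
        rw [Function.iterate_succ_apply]
        have hψi : ψ i < i := hh i hi le_rfl
        exact le_trans
          (ih (ψ i) hψi (fun j h1 h2 => hh j h1 (h2.trans hψi.le)) k) hψi.le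

lemma dp_congr' (m : ℕ) (ψ ψ' : ℕ → ℕ) (h0 : ψ 0 = 0)
    (hh : ∀ j, 1 ≤ j → j ≤ m → ψ j < j)
    (ha : ∀ j, j ≤ m → ψ' j = ψ j) :
    ∀ i, i ≤ m → dp ψ' i = dp ψ i := by
  intro i
  induction i using Nat.strong_induction_on with
  | _ i ih =>
    intro hi
    rcases Nat.eq_zero_or_pos i with rfl | hpos
    · rfl
    · have hψi : ψ i < i := hh i hpos hi
      have hh1 : ∀ j, 1 ≤ j → j ≤ i → ψ j < j := fun j h1 h2 => hh j h1 (h2.trans hi)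
      have hh2 : ∀ j, 1 ≤ j → j ≤ i → ψ' j < j := fun j h1 h2 => by
        rw [ha j (h2.trans hi)]; exact hh1 j h1 h2
      rw [dp_succ' ψ' i hpos hh2, dp_succ' ψ i hpos hh1, ha i hi,
        ih (ψ i) hψi (hψi.le.trans hi)]

lemma star_congr' (m : ℕ) (ψ ψ' : ℕ → ℕ) (φ φ' : ℕ → ℕ → ℕ)
    (h0 : ψ 0 = 0) (hh : ∀ j, 1 ≤ j → j ≤ m → ψ j < j)
    (hψa : ∀ j, j ≤ m → ψ' j = ψ j) (hφa : ∀ j, j ≤ m → φ' j = φ j) :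
    ∀ i, i ≤ m → star ψ' φ' i = star ψ φ i := by
  intro i hi
  rcases Nat.eq_zero_or_pos i with rfl | hpos
  · rfl
  · have hh1 : ∀ j, 1 ≤ j → j ≤ i → ψ j < j := fun j h1 h2 => hh j h1 (h2.trans hi)
    have hit : ∀ k, ψ'^[k] i = ψ^[k] i := by
      intro k
      induction k with
      | zero => rfl
      | succ k ihk =>
        rw [Function.iterate_succ_apply', Function.iterate_succ_apply', ihk,
          hψa _ ((iter_le' ψ h0 i hh1 k).trans hi)]
    simp only [_root_.star]
    rw [if_neg hpos.ne', if_neg hpos.ne',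
      dp_congr' m ψ ψ' h0 hh hψa i hi, hφa i hi, hit]

/-- Index shift deleting `m`. -/
def eDel (m j : ℕ) : ℕ := if j < m then j else j - 1

/-- Let `ψ ∈ Hp(n)` (`n > 1`), `φ` a `ψ`-compatible family,
and `m ∈ {1,…,n−1}` not in the image of `ψ` on `{1,…,n}`. Then:
(a) `ψ∖m ∈ Hp(n−1)`;
(b) the image of `ψ⋆φ` on `{1,…,n}` is contained in `{0} ∪ im ψ`, so in
particular `m ∉ im (ψ⋆φ)`;
(c) `φ∖m` is `(ψ∖m)`-compatible and `(ψ∖m)⋆(φ∖m) = (ψ⋆φ)∖m`;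
(d) `ψ|_m ∈ Hp(m)`, `φ|_m` is `ψ|_m`-compatible, and `(ψ|_m)⋆(φ|_m)` is the
restriction of `ψ⋆φ` to `{0,…,m}` (i.e. `star` only depends on the
restrictions of its arguments to `{0,…,m}` there). -/
theorem strip_star (n : ℕ) (hn : 1 < n) (ψ : ℕ → ℕ) (hψ : IsHeap n ψ)
    (φ : ℕ → ℕ → ℕ) (hφ : CompatFam n ψ φ)
    (m : ℕ) (hm1 : 1 ≤ m) (hmn : m ≤ n - 1)
    (him : ∀ i, 1 ≤ i → i ≤ n → ψ i ≠ m) :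
    IsHeap (n - 1) (strip ψ m) ∧
    ((∀ i, 1 ≤ i → i ≤ n → 1 ≤ star ψ φ i →
        ∃ j, 1 ≤ j ∧ j ≤ n ∧ ψ j = star ψ φ i) ∧
      ∀ i, 1 ≤ i → i ≤ n → star ψ φ i ≠ m) ∧
    (CompatFam (n - 1) (strip ψ m) (stripFam φ m) ∧
      ∀ i, i ≤ n - 1 → star (strip ψ m) (stripFam φ m) i = strip (star ψ φ) m i) ∧
    (IsHeap m ψ ∧ CompatFam m ψ φ ∧
      ∀ (ψ' : ℕ → ℕ) (φ' : ℕ → ℕ → ℕ),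
        (∀ j, j ≤ m → ψ' j = ψ j) → (∀ j, j ≤ m → φ' j = φ j) →
        ∀ i, i ≤ m → star ψ' φ' i = star ψ φ i) := by
  obtain ⟨h0, hhp⟩ := hψ
  have hmn' : m < n := by omega
  -- heap-below facts
  have hbelow : ∀ i, i ≤ n → ∀ j, 1 ≤ j → j ≤ i → ψ j < j :=
    fun i hi j h1 h2 => hhp j h1 (h2.trans hi)
  -- part (a)
  have ha : IsHeap (n - 1) (strip ψ m) := by
    constructor
    · simp only [strip, if_pos (by omega : (0:ℕ) < m)]; exact h0
    · intro i h1 h2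
      by_cases h : i < m
      · simpa [strip, h] using hhp i h1 (by omega)
      · have hi1 : i + 1 ≤ n := by omega
        have h3 : ψ (i + 1) < i + 1 := hhp (i + 1) (by omega) hi1
        have h4 : ψ (i + 1) ≠ m := him (i + 1) (by omega) hi1
        simp only [strip, if_neg h]
        split <;> omega
  -- basic step lemma
  have hstep : ∀ j, j ≤ n → j ≠ m → strip ψ m (eDel m j) = eDel m (ψ j) := by
    intro j hjn hjm
    rcases Nat.eq_zero_or_pos j with rfl | hj
    · rw [h0]
      simp [strip, eDel, (by omega : (0:ℕ) < m), h0]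
    · have hψj : ψ j < j := hhp j hj hjn
      rcases lt_or_gt_of_ne hjm with h | h
      · simp [strip, eDel, h, (by omega : ψ j < m)]
      · have h1 : ¬ j - 1 < m := by omega
        have h2 : j - 1 + 1 = j := by omega
        simp only [eDel, if_neg (by omega : ¬ j < m), strip, if_neg h1, h2]
  -- iterates avoid m
  have hne : ∀ j, j ≤ n → j ≠ m → ∀ k, ψ^[k] j ≠ m := by
    intro j hjn hjm k
    cases k with
    | zero => exact hjm
    | succ k =>
      rw [Function.iterate_succ_apply']
      set p := ψ^[k] j with hp
      have hpn : p ≤ n := (iter_le' ψ h0 j (hbelow j hjn) k).trans hjn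
      rcases Nat.eq_zero_or_pos p with hz | hpos
      · rw [hz, h0]; omega
      · exact him p hpos hpn
  -- iterate shift
  have hiter : ∀ j, j ≤ n → j ≠ m → ∀ k,
      (strip ψ m)^[k] (eDel m j) = eDel m (ψ^[k] j) := by
    intro j hjn hjm k
    induction k with
    | zero => rfl
    | succ k ihk =>
      rw [Function.iterate_succ_apply', ihk, Function.iterate_succ_apply']
      exact hstep (ψ^[k] j) ((iter_le' ψ h0 j (hbelow j hjn) k).trans hjn)
        (hne j hjn hjm k)
  have hepos : ∀ j, 1 ≤ j → j ≠ m → 1 ≤ eDel m j := by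
    intro j h1 h2; unfold eDel; split <;> omega
  have hele : ∀ j, j ≤ n → j ≠ m → eDel m j ≤ n - 1 := by
    intro j h1 h2; unfold eDel; split <;> omega
  -- dp shift
  have hdp : ∀ j, j ≤ n → j ≠ m → dp (strip ψ m) (eDel m j) = dp ψ j := by
    intro j
    induction j using Nat.strong_induction_on with
    | _ j ih =>
      intro hjn hjm
      rcases Nat.eq_zero_or_pos j with rfl | hj
      · simp [eDel, (by omega : (0:ℕ) < m), dp_zero']
      · have hψj : ψ j < j := hhp j hj hjn
        have he1 : 1 ≤ eDel m j := hepos j hj hjm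
        have he2 : eDel m j ≤ n - 1 := hele j hjn hjm
        have hsb : ∀ l, 1 ≤ l → l ≤ eDel m j → strip ψ m l < l :=
          fun l h1 h2 => ha.2 l h1 (h2.trans he2)
        rw [dp_succ' (strip ψ m) (eDel m j) he1 hsb, hstep j hjn hjm,
          ih (ψ j) hψj (by omega) (him j hj hjn),
          dp_succ' ψ j hj (hbelow j hjn)]
  -- family shift
  have hfam : ∀ j, 1 ≤ j → j ≠ m → stripFam φ m (eDel m j) = φ j := by
    intro j h1 h2
    rcases lt_or_gt_of_ne h2 with h | h
    · simp [stripFam, eDel, h]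
    · have : ¬ j - 1 < m := by omega
      simp only [eDel, if_neg (by omega : ¬ j < m), stripFam, if_neg this]
      have h4 : j - 1 + 1 = j := by omega
      rw [h4]
  -- star shift
  have hstar : ∀ j, j ≤ n → j ≠ m →
      star (strip ψ m) (stripFam φ m) (eDel m j) = eDel m (star ψ φ j) := by
    intro j hjn hjm
    rcases Nat.eq_zero_or_pos j with rfl | hj
    · simp [eDel, (by omega : (0:ℕ) < m), _root_.star]
    · have he1 : 1 ≤ eDel m j := hepos j hj hjm
      simp only [_root_.star]
      rw [if_neg (by omega : ¬ eDel m j = 0), if_neg (by omega : ¬ j = 0),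
        hdp j hjn hjm, hfam j hj hjm, hiter j hjn hjm]
  -- star ≤ id
  have hstarle : ∀ i, i ≤ n → star ψ φ i ≤ i := by
    intro i hi
    rcases Nat.eq_zero_or_pos i with rfl | hpos
    · simp [_root_.star]
    · simp only [_root_.star]
      rw [if_neg hpos.ne']
      exact iter_le' ψ h0 i (hbelow i hi) _
  -- part (b)
  have hb1 : ∀ i, 1 ≤ i → i ≤ n → 1 ≤ star ψ φ i →
      ∃ j, 1 ≤ j ∧ j ≤ n ∧ ψ j = star ψ φ i := by
    intro i h1 h2 hs
    have hdpi : dp ψ i = dp ψ (ψ i) + 1 := dp_succ' ψ i h1 (hbelow i h2)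
    have hheap := hφ.1 i h1 h2
    have hlt : φ i (dp ψ i) < dp ψ i := hheap.2 (dp ψ i) (by omega) le_rfl
    set k := dp ψ i - φ i (dp ψ i) with hk
    have hk1 : 1 ≤ k := by omega
    have hsi : star ψ φ i = ψ^[k] i := by
      simp only [_root_.star]; rw [if_neg (by omega : ¬ i = 0)]
    obtain ⟨s, hs'⟩ : ∃ s, k = s + 1 := ⟨k - 1, by omega⟩
    refine ⟨ψ^[s] i, ?_, (iter_le' ψ h0 i (hbelow i h2) s).trans h2, ?_⟩
    · by_contra hcon
      have hz : ψ^[s] i = 0 := by omega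
      rw [hsi, hs', Function.iterate_succ_apply', hz, h0] at hs
      omega
    · rw [hsi, hs', Function.iterate_succ_apply']
  have hb2 : ∀ i, 1 ≤ i → i ≤ n → star ψ φ i ≠ m := by
    intro i h1 h2
    rcases Nat.eq_zero_or_pos (star ψ φ i) with hz | hpos
    · omega
    · obtain ⟨j, hj1, hj2, hj3⟩ := hb1 i h1 h2 hpos
      rw [← hj3]; exact him j hj1 hj2
  -- preimage under eDel
  have hj' : ∀ i, 1 ≤ i → i ≤ n - 1 → ∃ j, 1 ≤ j ∧ j ≤ n ∧ j ≠ m ∧ eDel m j = i := by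
    intro i h1 h2
    by_cases h : i < m
    · exact ⟨i, h1, by omega, by omega, by simp [eDel, h]⟩
    · exact ⟨i + 1, by omega, by omega, by omega, by
        simp only [eDel]; rw [if_neg (by omega : ¬ i + 1 < m)]; omega⟩
  -- part (c): compatibility
  have hc1 : CompatFam (n - 1) (strip ψ m) (stripFam φ m) := by
    constructor
    · intro i h1 h2
      obtain ⟨j, hj1, hj2, hj3, hj4⟩ := hj' i h1 h2
      rw [← hj4, hdp j hj2 hj3, hfam j hj1 hj3]
      exact hφ.1 j hj1 hj2
    · intro i h1 h2 hs l hl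
      obtain ⟨j, hj1, hj2, hj3, hj4⟩ := hj' i h1 h2
      have hstepj : strip ψ m i = eDel m (ψ j) := by rw [← hj4, hstep j hj2 hj3]
      have hψj1 : 1 ≤ ψ j := by
        by_contra hcon
        have : ψ j = 0 := by omega
        rw [hstepj, this] at hs
        simp [eDel, (by omega : (0:ℕ) < m)] at hs
      have hψjm : ψ j ≠ m := him j hj1 hj2
      rw [hstepj, hfam (ψ j) hψj1 hψjm, ← hj4, hfam j hj1 hj3]
      apply hφ.2 j hj1 hj2 hψj1 l
      rw [← hj4, hdp j hj2 hj3] at hl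
      exact hl
  -- part (c): star equation
  have hc2 : ∀ i, i ≤ n - 1 →
      star (strip ψ m) (stripFam φ m) i = strip (star ψ φ) m i := by
    intro i hi
    by_cases h : i < m
    · have h1 : eDel m i = i := by simp [eDel, h]
      have h2 : star ψ φ i ≤ i := hstarle i (by omega)
      have h3 : strip (_root_.star ψ φ) m i = _root_.star ψ φ i := by
        simp only [strip, if_pos h]
      have h4 : eDel m (_root_.star ψ φ i) = _root_.star ψ φ i := by
        simp only [eDel]; rw [if_pos (by omega)]
      rw [h3]
      conv_lhs => rw [← h1]
      rw [hstar i (by omega) (by omega), h4]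
    · have h1 : eDel m (i + 1) = i := by
        simp only [eDel]; rw [if_neg (by omega : ¬ i + 1 < m)]; omega
      have h3 : strip (_root_.star ψ φ) m i = eDel m (_root_.star ψ φ (i + 1)) := by
        simp only [strip, eDel, if_neg h]
      rw [h3]
      conv_lhs => rw [← h1]
      rw [hstar (i + 1) (by omega) (by omega)]
  -- part (d)
  have hd1 : IsHeap m ψ := ⟨h0, fun i h1 h2 => hhp i h1 (h2.trans hmn'.le)⟩
  have hd2 : CompatFam m ψ φ :=
    ⟨fun i h1 h2 => hφ.1 i h1 (h2.trans hmn'.le),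
     fun i h1 h2 => hφ.2 i h1 (h2.trans hmn'.le)⟩
  refine ⟨ha, ⟨hb1, hb2⟩, ⟨hc1, hc2⟩, hd1, hd2, ?_⟩
  intro ψ' φ' hψa hφa i hi
  exact star_congr' m ψ ψ' φ φ' h0 (fun j h1 h2 => hhp j h1 (h2.trans hmn'.le))
    hψa hφa i hi
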